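/- For every r ≥ 1, the set of pairs (s_1, s_2) of coprime nonzero integers with s_2 > 0 such that Γ_{s_1,s_2} ∩ Π_r = ∅ is finite. Equivalently, for each r, all but finitely many connected one-dimensional closed subgroups of T^2 of the form Γ_{s_1,s_2} intersect Π_r. -/

import Mathlib

/-!
If `r < |s₁|`, fix `y = 1/(2r)`: as `x` runs over `(0, 1/r)`, the real number `s₁x + s₂y` sweeps
an open interval of length `|s₁|/r > 1`, so it hits an integer and `(x, y)` lies in
`Γ_{s₁,s₂} ∩ Π_r`. The same works with the roles of `s₁` and `s₂` exchanged, so every pair with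
`Γ_{s₁,s₂} ∩ Π_r = ∅` lies in the box `[-r, r]²`.
-/

noncomputable section

/-- The two-dimensional torus `T² = (ℝ/ℤ)²`. -/
abbrev T2 := AddCircle (1 : ℝ) × AddCircle (1 : ℝ)

/-- The subgroup `Γ_{s₁,s₂} = {(θ₁, θ₂) ∈ T² : s₁θ₁ + s₂θ₂ = 0}`. -/
def GammaSlope (s1 s2 : ℤ) : Set T2 := {θ : T2 | s1 • θ.1 + s2 • θ.2 = 0}

/-- `Π_r ⊂ T²`, the image under `q` of the open square `(0, 1/r)²`. -/
def PiSquare (r : ℕ) : Set T2 :=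
  {θ : T2 | ∃ x y : ℝ, 0 < x ∧ x < 1 / (r : ℝ) ∧ 0 < y ∧ y < 1 / (r : ℝ) ∧
    θ = ((x : AddCircle (1 : ℝ)), (y : AddCircle (1 : ℝ)))}

open Set

lemma exists_mem_Ioo_mul_add_eq_intCast_of_pos {a ε : ℝ} (ha : 0 < a) (haε : 1 < a * ε)
    (c : ℝ) : ∃ x ∈ Ioo 0 ε, ∃ k : ℤ, a * x + c = k := by
  refine ⟨((⌊c⌋ + 1 : ℤ) - c) / a, ⟨?_, ?_⟩, ⌊c⌋ + 1, by field_simp; ring⟩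
  · exact div_pos (by push_cast; linarith [Int.lt_floor_add_one c]) ha
  · rw [div_lt_iff₀ ha]
    push_cast
    linarith [Int.floor_le c]

lemma exists_mem_Ioo_mul_add_eq_intCast {a ε : ℝ} (haε : 1 < |a| * ε) (c : ℝ) :
    ∃ x ∈ Ioo 0 ε, ∃ k : ℤ, a * x + c = k := by
  rcases lt_trichotomy a 0 with ha | rfl | ha
  · rw [abs_of_neg ha] at haε
    obtain ⟨x, hx, k, hk⟩ := exists_mem_Ioo_mul_add_eq_intCast_of_pos (neg_pos.2 ha) haε (-c)
    exact ⟨x, hx, -k, by push_cast; linarith⟩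
  · norm_num at haε
  · rw [abs_of_pos ha] at haε
    exact exists_mem_Ioo_mul_add_eq_intCast_of_pos ha haε c

lemma mk_mem_gammaSlope_iff (s1 s2 : ℤ) (x y : ℝ) :
    ((x : AddCircle (1 : ℝ)), (y : AddCircle (1 : ℝ))) ∈ GammaSlope s1 s2 ↔
      ∃ k : ℤ, (s1 : ℝ) * x + s2 * y = k := by
  rw [GammaSlope, mem_ofPred_eq, ← AddCircle.coe_zsmul, ← AddCircle.coe_zsmul,
    ← AddCircle.coe_add, AddCircle.coe_eq_zero_iff]
  simp only [zsmul_eq_mul, mul_one, eq_comm]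

lemma mk_mem_piSquare {r : ℕ} {x y : ℝ} (hx : x ∈ Ioo 0 (1 / (r : ℝ)))
    (hy : y ∈ Ioo 0 (1 / (r : ℝ))) :
    ((x : AddCircle (1 : ℝ)), (y : AddCircle (1 : ℝ))) ∈ PiSquare r :=
  ⟨x, y, hx.1, hx.2, hy.1, hy.2, rfl⟩

lemma abs_le_of_gammaSlope_inter_piSquare_eq_empty {r : ℕ} (hr : 1 ≤ r) {s1 s2 : ℤ}
    (h : GammaSlope s1 s2 ∩ PiSquare r = ∅) : |s1| ≤ r ∧ |s2| ≤ r := by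
  have hr0 : (0 : ℝ) < r := by exact_mod_cast hr
  have hmid : 1 / (2 * (r : ℝ)) ∈ Ioo 0 (1 / (r : ℝ)) :=
    ⟨by positivity, one_div_lt_one_div_of_lt hr0 (by linarith)⟩
  have hlong : ∀ s : ℤ, (r : ℤ) < |s| → 1 < |(s : ℝ)| * (1 / r) := fun s hs => by
    rw [mul_one_div, one_lt_div hr0]
    exact_mod_cast hs
  have hdisjoint : ∀ x y : ℝ, x ∈ Ioo 0 (1 / (r : ℝ)) → y ∈ Ioo 0 (1 / (r : ℝ)) →
      ∀ k : ℤ, (s1 : ℝ) * x + s2 * y ≠ k := fun x y hx hy k hk =>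
    h.subset ⟨(mk_mem_gammaSlope_iff s1 s2 x y).2 ⟨k, hk⟩, mk_mem_piSquare hx hy⟩
  constructor
  · by_contra! hs
    obtain ⟨x, hx, k, hk⟩ := exists_mem_Ioo_mul_add_eq_intCast (hlong s1 hs) (s2 * (1 / (2 * r)))
    exact hdisjoint x _ hx hmid k hk
  · by_contra! hs
    obtain ⟨y, hy, k, hk⟩ := exists_mem_Ioo_mul_add_eq_intCast (hlong s2 hs) (s1 * (1 / (2 * r)))
    exact hdisjoint _ y hmid hy k (by rw [← hk]; ring)

/-- For every `r ≥ 1`, only finitely many of the subgroups `Γ_{s₁,s₂}` (with `s₁, s₂`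
coprime, `s₁ ≠ 0`, `s₂ > 0`) fail to intersect `Π_r`. -/
theorem finite_gammaSlope_not_meeting_piSquare (r : ℕ) (hr : 1 ≤ r) :
    {p : ℤ × ℤ | IsCoprime p.1 p.2 ∧ p.1 ≠ 0 ∧ 0 < p.2 ∧
      GammaSlope p.1 p.2 ∩ PiSquare r = ∅}.Finite := by
  refine ((finite_Icc (-(r : ℤ)) r).prod (finite_Icc (-(r : ℤ)) r)).subset ?_
  rintro ⟨s1, s2⟩ ⟨-, -, -, h⟩
  obtain ⟨h1, h2⟩ := abs_le_of_gammaSlope_inter_piSquare_eq_empty hr h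
  exact ⟨abs_le.1 h1, abs_le.1 h2⟩
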